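/- arXiv:1601.07348 — 4 statements merged into one kernel-verified Lean document; each statement's English description precedes it below -/
import Mathlib

section
/- For all d ≥ 0, the power sum S_d(1) := Σ_{a monic of degree d in F_q[θ]} 1/a equals 1/l_d. -/
/-!
For an `𝔽_q`-lattice `Λ` in a field `K`, the exponential `e_Λ(z) = z ∏_{0 ≠ λ ∈ Λ} (1 - z / λ)` is
`𝔽_q`-linear with derivative `1`, so `∑_{λ ∈ Λ} (z + λ)⁻¹ = e_Λ(z)⁻¹`. Adjoining a generator `b`
to `Λ` replaces `e_Λ(z)` by `e_Λ(z) - e_Λ(b)^{1-q} e_Λ(z)^q`, which is the identity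
`∑_{c ∈ 𝔽_q} (y + c t)⁻¹ = (y - t^{1-q} y^q)⁻¹`. The monic polynomials of degree `d` form the coset
`θ^d + Λ_d` with `Λ_d = 𝔽_q 1 + ⋯ + 𝔽_q θ^{d-1}`, so `S_d(1) = e_{Λ_d}(θ^d)⁻¹`, and the functional
equation `e_{d+1}(θ z) = θ e_{d+1}(z) + (l_{d+1} / l_d^q) e_d(z)^q` gives `e_{Λ_d}(θ^d) = l_d` by
induction on `d`.
-/

set_option autoImplicit false

open Polynomial

section FiniteFieldSums

variable {Fq K : Type*} [Field Fq] [Field K] [Algebra Fq K]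

theorem sub_div_pow_mul_pow_eq_neg_mul {y t : K} (ht : t ≠ 0) (n : ℕ) :
    y - t / t ^ n * y ^ n = -(t * ((y / t) ^ n - y / t)) := by
  rw [div_pow]; field_simp; ring

theorem add_neg_smul_eq_mul {y t : K} (ht : t ≠ 0) (c : Fq) :
    y + (-c) • t = t * (y / t - algebraMap Fq K c) := by
  rw [Algebra.smul_def, map_neg]; field_simp; ring

theorem div_ne_algebraMap {y t : K} (ht : t ≠ 0) (hy : ∀ c : Fq, y + c • t ≠ 0) (c : Fq) :
    y / t ≠ algebraMap Fq K c := fun h =>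
  hy (-c) (by rw [add_neg_smul_eq_mul ht, h, sub_self, mul_zero])

variable [Fintype Fq]

local notation "q" => Fintype.card Fq

theorem splits_X_pow_card_sub_X : (X ^ q - X : Fq[X]).Splits := by
  rw [splits_iff_card_roots, FiniteField.roots_X_pow_card_sub_X,
    FiniteField.X_pow_card_sub_X_natDegree_eq Fq Fintype.one_lt_card]
  rfl

theorem pow_card_sub_self_ne_zero {x : K} (hx : ∀ c : Fq, x ≠ algebraMap Fq K c) :
    x ^ q - x ≠ 0 := by
  intro h
  obtain ⟨c, rfl⟩ := splits_X_pow_card_sub_X.mem_range_of_isRoot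
    (FiniteField.X_pow_card_sub_X_ne_zero Fq Fintype.one_lt_card)
    (x := x) (i := algebraMap Fq K) (by simpa using h)
  exact hx c rfl

theorem sum_inv_sub_algebraMap {x : K} (hx : ∀ c : Fq, x ≠ algebraMap Fq K c) :
    ∑ c : Fq, (x - algebraMap Fq K c)⁻¹ = -(x ^ q - x)⁻¹ := by
  -- logarithmic derivative of `X ^ q - X = ∏ c, (X - c)`, whose derivative is `-1`
  have hsplit := (splits_X_pow_card_sub_X (Fq := Fq)).map (algebraMap Fq K)
  have h := hsplit.eval_derivative_div_eval_of_ne_zero (x := x)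
    (by simpa using pow_card_sub_self_ne_zero hx)
  rw [splits_X_pow_card_sub_X.roots_map, FiniteField.roots_X_pow_card_sub_X] at h
  have hq : (q : K) = 0 := by
    rw [← map_natCast (algebraMap Fq K), FiniteField.cast_card_eq_zero, map_zero]
  simp only [Polynomial.map_sub, Polynomial.map_pow, map_X, eval_sub, eval_pow, eval_X,
    derivative_sub, derivative_X_pow, derivative_X, eval_mul, eval_C, hq, zero_mul, zero_sub,
    eval_one, Multiset.map_map] at h
  rw [neg_div, one_div, ← Finset.sum_eq_multiset_sum] at h
  simpa only [Function.comp_def, one_div, eq_comm] using h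

theorem sub_div_pow_mul_pow_ne_zero {y t : K} (ht : t ≠ 0) (hy : ∀ c : Fq, y + c • t ≠ 0) :
    y - t / t ^ q * y ^ q ≠ 0 := by
  rw [sub_div_pow_mul_pow_eq_neg_mul ht, neg_ne_zero]
  exact mul_ne_zero ht (pow_card_sub_self_ne_zero (div_ne_algebraMap ht hy))

theorem sum_inv_add_smul {y t : K} (ht : t ≠ 0) (hy : ∀ c : Fq, y + c • t ≠ 0) :
    ∑ c : Fq, (y + c • t)⁻¹ = (y - t / t ^ q * y ^ q)⁻¹ := by
  calc ∑ c : Fq, (y + c • t)⁻¹ = ∑ c : Fq, (y + (-c) • t)⁻¹ :=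
        (Fintype.sum_equiv (Equiv.neg Fq) _ _ fun c => by simp).symm
    _ = t⁻¹ * ∑ c : Fq, (y / t - algebraMap Fq K c)⁻¹ := by
        simp only [add_neg_smul_eq_mul ht, mul_inv, Finset.mul_sum]
    _ = (y - t / t ^ q * y ^ q)⁻¹ := by
        rw [sum_inv_sub_algebraMap (div_ne_algebraMap ht hy), sub_div_pow_mul_pow_eq_neg_mul ht,
          inv_neg, mul_inv, mul_neg]

end FiniteFieldSums

section LatticeExp

variable {Fq K : Type*} [Field Fq] [Field K] [Algebra Fq K]

theorem sum_snoc_smul (b : ℕ → K) {n : ℕ} (f : Fin n → Fq) (c : Fq) :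
    ∑ i : Fin (n + 1), (Fin.snoc f c : Fin (n + 1) → Fq) i • b i =
      c • b n + ∑ i : Fin n, f i • b i := by
  simp [Fin.sum_univ_castSucc, add_comm]

variable [Fintype Fq]

local notation "q" => Fintype.card Fq

variable (Fq) in
/-- With `t i = latticeExp Fq t i (b i)` for `i < d`, `latticeExp Fq t d` is the exponential
`z ∏_{0 ≠ λ ∈ Λ} (1 - z / λ)` of the lattice `Λ = 𝔽_q b_0 + ⋯ + 𝔽_q b_{d-1}`. The normalisers
`t` are a parameter so that they can be identified with `l_d` independently. -/
noncomputable def latticeExp (t : ℕ → K) : ℕ → K →ₗ[Fq] K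
  | 0 => LinearMap.id
  | d + 1 => latticeExp t d - (t d / t d ^ q) •
      ((FiniteField.frobeniusAlgHom Fq K).toLinearMap ∘ₗ latticeExp t d)

@[simp]
theorem latticeExp_zero (t : ℕ → K) (z : K) : latticeExp Fq t 0 z = z := rfl

theorem latticeExp_succ (t : ℕ → K) (d : ℕ) (z : K) : latticeExp Fq t (d + 1) z =
    latticeExp Fq t d z - t d / t d ^ q * latticeExp Fq t d z ^ q :=
  rfl

variable {t b : ℕ → K}

theorem latticeExp_add_smul {n : ℕ} (hb : latticeExp Fq t n (b n) = t n) (z : K) (c : Fq) :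
    latticeExp Fq t n (z + c • b n) = latticeExp Fq t n z + c • t n := by
  rw [map_add, map_smul, hb]

theorem latticeExp_ne_zero {n : ℕ} (hb : ∀ i < n, latticeExp Fq t i (b i) = t i)
    (ht : ∀ i < n, t i ≠ 0) {z : K} (hz : ∀ f : Fin n → Fq, z + ∑ i, f i • b i ≠ 0) :
    latticeExp Fq t n z ≠ 0 := by
  induction n generalizing z with
  | zero => simpa using hz 0
  | succ n ih =>
    rw [latticeExp_succ]
    refine sub_div_pow_mul_pow_ne_zero (ht n n.lt_succ_self) fun c => ?_
    rw [← latticeExp_add_smul (hb n n.lt_succ_self)]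
    refine ih (fun i hi => hb i (hi.trans n.lt_succ_self))
      (fun i hi => ht i (hi.trans n.lt_succ_self)) fun f => ?_
    simpa [sum_snoc_smul, add_assoc] using hz (Fin.snoc f c)

theorem sum_inv_add_latticeSum {n : ℕ} (hb : ∀ i < n, latticeExp Fq t i (b i) = t i)
    (ht : ∀ i < n, t i ≠ 0) {z : K} (hz : ∀ f : Fin n → Fq, z + ∑ i, f i • b i ≠ 0) :
    ∑ f : Fin n → Fq, (z + ∑ i, f i • b i)⁻¹ = (latticeExp Fq t n z)⁻¹ := by
  induction n generalizing z with
  | zero => simp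
  | succ n ih =>
    have hb' : ∀ i < n, latticeExp Fq t i (b i) = t i := fun i hi =>
      hb i (hi.trans n.lt_succ_self)
    have ht' : ∀ i < n, t i ≠ 0 := fun i hi => ht i (hi.trans n.lt_succ_self)
    have hzc : ∀ (c : Fq) (f : Fin n → Fq), z + c • b n + ∑ i, f i • b i ≠ 0 := fun c f =>
      by simpa [sum_snoc_smul, add_assoc] using hz (Fin.snoc f c)
    calc ∑ f : Fin (n + 1) → Fq, (z + ∑ i, f i • b i)⁻¹
        = ∑ c : Fq, ∑ f : Fin n → Fq, (z + c • b n + ∑ i, f i • b i)⁻¹ := by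
          rw [← Fintype.sum_prod_type', ← (Fin.snocEquiv fun _ => Fq).sum_comp]
          simp [Fin.snocEquiv, sum_snoc_smul, add_assoc]
      _ = ∑ c : Fq, (latticeExp Fq t n z + c • t n)⁻¹ := by
          simp only [ih hb' ht' (hzc _), latticeExp_add_smul (hb n n.lt_succ_self)]
      _ = (latticeExp Fq t (n + 1) z)⁻¹ := by
          rw [latticeExp_succ]
          refine sum_inv_add_smul (ht n n.lt_succ_self) fun c => ?_
          rw [← latticeExp_add_smul (hb n n.lt_succ_self)]
          exact latticeExp_ne_zero hb' ht' (hzc c)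

end LatticeExp

section CarlitzFactorial

variable {Fq K : Type*} [Field Fq] [Fintype Fq] [Field K] [Algebra Fq K]
variable {θ : K} {l : ℕ → K}

local notation "q" => Fintype.card Fq

theorem sub_pow_card (x y : K) : (x - y) ^ q = x ^ q - y ^ q :=
  map_sub (FiniteField.frobeniusAlgHom Fq K) x y

theorem add_pow_card (x y : K) : (x + y) ^ q = x ^ q + y ^ q :=
  map_add (FiniteField.frobeniusAlgHom Fq K) x y

theorem latticeExp_mul_left
    (hl : ∀ i, l (i + 1) = (θ - θ ^ q ^ (i + 1)) * l i) (hl_ne : ∀ i, l i ≠ 0)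
    (d : ℕ) (z : K) :
    latticeExp Fq l (d + 1) (θ * z) = θ * latticeExp Fq l (d + 1) z +
      l (d + 1) / l d ^ q * latticeExp Fq l d z ^ q := by
  induction d generalizing z with
  | zero =>
    simp only [latticeExp_succ, latticeExp_zero, hl 0, mul_pow]
    field_simp [hl_ne 0]
    ring
  | succ d ih =>
    have hT : θ ^ q ^ (d + 1 + 1) = (θ ^ q ^ (d + 1)) ^ q := by
      rw [← pow_mul, ← pow_succ]
    have hl1q : l (d + 1) ^ q = (θ ^ q - (θ ^ q ^ (d + 1)) ^ q) * l d ^ q := by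
      rw [hl d, mul_pow, sub_pow_card]
    have haq : latticeExp Fq l (d + 1) z ^ q =
        latticeExp Fq l d z ^ q - l d ^ q / (l d ^ q) ^ q * (latticeExp Fq l d z ^ q) ^ q := by
      rw [latticeExp_succ, sub_pow_card, mul_pow, div_pow]
    rw [latticeExp_succ, ih, latticeExp_succ l (d + 1) z, add_pow_card, mul_pow, mul_pow, div_pow,
      hl1q, haq, hl (d + 1), hT, hl d]
    have hL := hl_ne d
    have hθT : θ - θ ^ q ^ (d + 1) ≠ 0 := left_ne_zero_of_mul (hl d ▸ hl_ne (d + 1))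
    have hθTq := pow_ne_zero q hθT
    rw [sub_pow_card] at hθTq
    field_simp
    ring

theorem latticeExp_pow_self (hl0 : l 0 = 1)
    (hl : ∀ i, l (i + 1) = (θ - θ ^ q ^ (i + 1)) * l i) (hl_ne : ∀ i, l i ≠ 0)
    (d : ℕ) : latticeExp Fq l d (θ ^ d) = l d := by
  induction d with
  | zero => rw [pow_zero, latticeExp_zero, hl0]
  | succ d ih =>
    have hvanish : latticeExp Fq l (d + 1) (θ ^ d) = 0 := by
      rw [latticeExp_succ, ih, div_mul_cancel₀ _ (pow_ne_zero _ (hl_ne d)), sub_self]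
    rw [pow_succ', latticeExp_mul_left hl hl_ne, hvanish, ih, mul_zero, zero_add,
      div_mul_cancel₀ _ (pow_ne_zero _ (hl_ne d))]

end CarlitzFactorial

theorem ne_zero_of_pow_ne_self {K : Type*} [Field K] {θ : K} {l : ℕ → K} {q : ℕ} (hq : 1 < q)
    (hθ : ∀ n, 1 < n → θ ^ n ≠ θ) (hl0 : l 0 = 1)
    (hl : ∀ i, l (i + 1) = (θ - θ ^ q ^ (i + 1)) * l i) (i : ℕ) : l i ≠ 0 := by
  induction i with
  | zero => simp [hl0]
  | succ i ih =>
    rw [hl i]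
    exact mul_ne_zero (sub_ne_zero.mpr (hθ _ (Nat.one_lt_pow i.succ_ne_zero hq)).symm) ih

theorem RatFunc.X_pow_ne_X {F : Type*} [Field F] {n : ℕ} (hn : n ≠ 1) :
    (RatFunc.X : RatFunc F) ^ n ≠ RatFunc.X := by
  rw [← RatFunc.algebraMap_X, ← map_pow, Ne, (RatFunc.algebraMap_injective F).eq_iff]
  intro h
  simpa [hn] using congrArg natDegree h

theorem finsum_monic_natDegree_eq_sum {F M : Type*} [Field F] [Fintype F] [AddCommMonoid M]
    (g : F[X] → M) (d : ℕ) :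
    ∑ᶠ a ∈ {a : F[X] | a.Monic ∧ a.natDegree = d}, g a =
      ∑ f : Fin d → F, g (X ^ d + ∑ i : Fin d, C (f i) * X ^ (i : ℕ)) := by
  simp only [C_mul_X_pow_eq_monomial]
  rw [← finsum_set_coe_eq_finsum_mem, ← finsum_eq_sum_of_fintype]
  exact (finsum_comp_equiv ((monicEquivDegreeLT d).trans (degreeLTEquiv F d).toEquiv).symm).symm

/-- For all `d ≥ 0`, the power sum `S_d(1) = ∑_{a ∈ A⁺(d)} a⁻¹` equals `1 / l_d`
in `K = F_q(θ)`. -/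
theorem powerSum_one_eq_inv_l
    (Fq : Type) [Field Fq] [Fintype Fq] (q : ℕ) (hq : q = Fintype.card Fq)
    (θ : RatFunc Fq) (hθ : θ = RatFunc.X)
    (l : ℕ → RatFunc Fq) (hl0 : l 0 = 1)
    (hl : ∀ i, l (i + 1) = (θ - θ ^ q ^ (i + 1)) * l i)
    (d : ℕ) :
    ∑ᶠ a ∈ {a : Polynomial Fq | a.Monic ∧ a.natDegree = d},
      (algebraMap (Polynomial Fq) (RatFunc Fq) a)⁻¹ = (l d)⁻¹ := by
  subst hq hθ
  have hl_ne :=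
    ne_zero_of_pow_ne_self Fintype.one_lt_card (fun n hn => RatFunc.X_pow_ne_X hn.ne') hl0 hl
  have hmap : ∀ f : Fin d → Fq,
      algebraMap Fq[X] (RatFunc Fq) (X ^ d + ∑ i : Fin d, C (f i) * X ^ (i : ℕ)) =
        RatFunc.X ^ d + ∑ i : Fin d, f i • RatFunc.X ^ (i : ℕ) := fun f => by
    simp [RatFunc.algebraMap_X, Algebra.smul_def]
  rw [finsum_monic_natDegree_eq_sum, Finset.sum_congr rfl fun f _ => by rw [hmap f],
    sum_inv_add_latticeSum (t := l) (fun i _ => latticeExp_pow_self hl0 hl hl_ne i)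
      (fun i _ => hl_ne i), latticeExp_pow_self hl0 hl hl_ne]
  intro f
  rw [← hmap, Ne, map_eq_zero_iff _ (RatFunc.algebraMap_injective Fq)]
  exact (monic_X_pow_add (degree_sum_fin_lt f)).ne_zero
end

section
/- For all d ≥ 0, with S_d(n; σ) := Σ_{a monic of degree d} a(t)/a^n and S_d(n; 1) := Σ_{a monic of degree d} 1/a^n, the identity S_d(1;σ)·S_d(1;1) = S_d(2;σ) − S_d(1;1)·Σ_{i=0}^{d-1} S_i(1;σ) holds in F_q(θ)(t). -/
/-! Expanding the product, the diagonal gives `S_d(2;σ)` and every off-diagonal pair is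
`(b + c, b)` with `c ≠ 0`, `deg c < d`. For fixed `c`, the partial fraction
`1/((b + c) b) = (1/b - 1/(b + c))/c`, additivity of `a ↦ a(t)` and the invariance of `A⁺(d)`
under `b ↦ b + c` collapse the sum over `b` to `c(t)/c · S_d(1;1)`. Writing `c = λ m` with
`λ ∈ F_qˣ` and `m` monic, `∑ c(t)/c = (q - 1) ∑_{i<d} S_i(1;σ) = -∑_{i<d} S_i(1;σ)`. -/

set_option autoImplicit false

open Polynomial

namespace Polynomial

section Finiteness

variable {R : Type*} [Semiring R] [Finite R] (d : ℕ)

theorem finite_setOf_degree_lt : {p : R[X] | p.degree < d}.Finite := by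
  have := Finite.of_equiv _ (degreeLTEquiv R d).toEquiv.symm
  exact (Set.toFinite (degreeLT R d : Set R[X])).subset fun _ => mem_degreeLT.2

theorem finite_setOf_monic_natDegree_lt : {p : R[X] | p.Monic ∧ p.natDegree < d}.Finite :=
  (finite_setOf_degree_lt d).subset fun _ hp =>
    degree_le_natDegree.trans_lt (WithBot.coe_lt_coe.2 hp.2)

theorem finite_setOf_monic_natDegree_eq : {p : R[X] | p.Monic ∧ p.natDegree = d}.Finite :=
  (finite_setOf_monic_natDegree_lt (d + 1)).subset fun _ hp => ⟨hp.1, hp.2 ▸ d.lt_succ_self⟩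

theorem finite_setOf_ne_zero_degree_lt : {p : R[X] | p ≠ 0 ∧ p.degree < d}.Finite :=
  (finite_setOf_degree_lt d).subset fun _ hp => hp.2

end Finiteness

variable (Fq : Type*) [Field Fq] [Fintype Fq]

noncomputable def monicsOfDegree (d : ℕ) : Finset Fq[X] :=
  (finite_setOf_monic_natDegree_eq d).toFinset

noncomputable def monicsOfDegreeLT (d : ℕ) : Finset Fq[X] :=
  (finite_setOf_monic_natDegree_lt d).toFinset

noncomputable def nonzeroOfDegreeLT (d : ℕ) : Finset Fq[X] :=
  (finite_setOf_ne_zero_degree_lt d).toFinset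

variable {Fq} {d : ℕ} {a b c : Fq[X]}

@[simp]
theorem mem_monicsOfDegree : a ∈ monicsOfDegree Fq d ↔ a.Monic ∧ a.natDegree = d :=
  Set.Finite.mem_toFinset _

theorem coe_monicsOfDegree :
    (monicsOfDegree Fq d : Set Fq[X]) = {a | a.Monic ∧ a.natDegree = d} :=
  Set.Finite.coe_toFinset _

@[simp]
theorem mem_monicsOfDegreeLT : a ∈ monicsOfDegreeLT Fq d ↔ a.Monic ∧ a.natDegree < d :=
  Set.Finite.mem_toFinset _

@[simp]
theorem mem_nonzeroOfDegreeLT : c ∈ nonzeroOfDegreeLT Fq d ↔ c ≠ 0 ∧ c.degree < d :=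
  Set.Finite.mem_toFinset _

theorem sum_monicsOfDegreeLT {M : Type*} [AddCommMonoid M] (f : Fq[X] → M) :
    ∑ a ∈ monicsOfDegreeLT Fq d, f a = ∑ j ∈ Finset.range d, ∑ a ∈ monicsOfDegree Fq j, f a := by
  rw [← Finset.sum_fiberwise_of_maps_to (g := natDegree) (t := Finset.range d)
    (fun a ha => Finset.mem_range.2 (mem_monicsOfDegreeLT.1 ha).2)]
  refine Finset.sum_congr rfl fun j hj => Finset.sum_congr (Finset.ext fun a => ?_) fun _ _ => rfl
  simp only [Finset.mem_filter, mem_monicsOfDegreeLT, mem_monicsOfDegree]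
  grind

theorem degree_eq_of_mem_monicsOfDegree (ha : a ∈ monicsOfDegree Fq d) : a.degree = d := by
  obtain ⟨hm, rfl⟩ := mem_monicsOfDegree.1 ha
  exact degree_eq_natDegree hm.ne_zero

theorem add_mem_monicsOfDegree (hb : b ∈ monicsOfDegree Fq d) (hc : c.degree < d) :
    b + c ∈ monicsOfDegree Fq d := by
  have hcb : c.degree < b.degree := degree_eq_of_mem_monicsOfDegree hb ▸ hc
  obtain ⟨hm, rfl⟩ := mem_monicsOfDegree.1 hb
  exact mem_monicsOfDegree.2 ⟨hm.add_of_left hcb, natDegree_add_eq_left_of_degree_lt hcb⟩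

theorem add_mem_monicsOfDegree_iff (hc : c.degree < d) :
    b + c ∈ monicsOfDegree Fq d ↔ b ∈ monicsOfDegree Fq d :=
  ⟨fun h => add_neg_cancel_right b c ▸ add_mem_monicsOfDegree h (by rwa [degree_neg]),
    fun h => add_mem_monicsOfDegree h hc⟩

theorem degree_sub_lt_of_mem_monicsOfDegree (ha : a ∈ monicsOfDegree Fq d)
    (hb : b ∈ monicsOfDegree Fq d) : (a - b).degree < d := by
  have hab := (degree_eq_of_mem_monicsOfDegree ha).trans (degree_eq_of_mem_monicsOfDegree hb).symm
  have := degree_sub_lt_left hab (mem_monicsOfDegree.1 ha).1.ne_zero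
    (by rw [(mem_monicsOfDegree.1 ha).1.leadingCoeff, (mem_monicsOfDegree.1 hb).1.leadingCoeff])
  rwa [degree_eq_of_mem_monicsOfDegree ha] at this

theorem sum_monicsOfDegree_add {M : Type*} [AddCommMonoid M] (f : Fq[X] → M)
    (hc : c.degree < d) :
    ∑ b ∈ monicsOfDegree Fq d, f (b + c) = ∑ b ∈ monicsOfDegree Fq d, f b :=
  Finset.sum_equiv (Equiv.addRight c) (fun _ => (add_mem_monicsOfDegree_iff hc).symm)
    fun _ _ => rfl

theorem sum_monicsOfDegree_eq_add_sum_nonzeroOfDegreeLT {M : Type*} [AddCommMonoid M]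
    (f : Fq[X] → M) (hb : b ∈ monicsOfDegree Fq d) :
    ∑ a ∈ monicsOfDegree Fq d, f a = f b + ∑ c ∈ nonzeroOfDegreeLT Fq d, f (b + c) := by
  classical
  rw [← Finset.add_sum_erase _ _ hb]
  congr 1
  refine (Finset.sum_equiv (Equiv.addLeft b) (fun c => ?_) fun _ _ => rfl).symm
  simp only [mem_nonzeroOfDegreeLT, Equiv.coe_addLeft, Finset.mem_erase, ne_eq,
    add_eq_left]
  refine ⟨fun ⟨hc0, hc⟩ => ⟨hc0, add_mem_monicsOfDegree hb hc⟩, fun ⟨hc0, hbc⟩ => ⟨hc0, ?_⟩⟩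
  simpa using degree_sub_lt_of_mem_monicsOfDegree hbc hb

theorem sum_nonzeroOfDegreeLT_eq_sum_C_mul [DecidableEq Fq] {M : Type*} [AddCommMonoid M]
    (g : Fq[X] → M) :
    ∑ c ∈ nonzeroOfDegreeLT Fq d, g c =
      ∑ l ∈ Finset.univ.erase 0, ∑ m ∈ monicsOfDegreeLT Fq d, g (C l * m) := by
  rw [← Finset.sum_product (f := fun p => g (C p.1 * p.2))]
  refine (Finset.sum_nbij' (fun p => C p.1 * p.2)
    (fun c => (c.leadingCoeff, C c.leadingCoeff⁻¹ * c)) ?_ ?_ ?_ ?_ fun _ _ => rfl).symm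
  · simp only [Finset.mem_product, Finset.mem_erase, Finset.mem_univ, and_true,
      mem_monicsOfDegreeLT, mem_nonzeroOfDegreeLT, Prod.forall]
    rintro l m ⟨hl, hm, hmd⟩
    exact ⟨mul_ne_zero (C_ne_zero.2 hl) hm.ne_zero,
      (degree_C_mul hl).trans_lt (degree_le_natDegree.trans_lt (WithBot.coe_lt_coe.2 hmd))⟩
  · simp only [Finset.mem_product, Finset.mem_erase, Finset.mem_univ, and_true,
      mem_monicsOfDegreeLT, mem_nonzeroOfDegreeLT]
    rintro c ⟨hc, hcd⟩
    have hlc : c.leadingCoeff ≠ 0 := leadingCoeff_ne_zero.2 hc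
    refine ⟨hlc, monic_C_mul_of_mul_leadingCoeff_eq_one (inv_mul_cancel₀ hlc), ?_⟩
    rw [natDegree_C_mul (inv_ne_zero hlc)]
    exact (natDegree_lt_iff_degree_lt hc).2 hcd
  · simp only [Finset.mem_product, Finset.mem_erase, Finset.mem_univ, and_true,
      mem_monicsOfDegreeLT, Prod.forall, Prod.mk.injEq]
    rintro l m ⟨hl, hm, -⟩
    rw [leadingCoeff_C_mul_of_isUnit hl.isUnit, hm.leadingCoeff, mul_one, ← mul_assoc, ← C_mul,
      inv_mul_cancel₀ hl, C_1, one_mul]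
    exact ⟨rfl, rfl⟩
  · intro c hc
    rw [← mul_assoc, ← C_mul, mul_inv_cancel₀ (leadingCoeff_ne_zero.2
      (mem_nonzeroOfDegreeLT.1 hc).1), C_1, one_mul]

section Sums

variable {K : Type*} [Field K] {i : Fq[X] →+* K} (s : Fq[X] →+* K)

theorem sum_nonzeroOfDegreeLT_div (hi : Function.Injective i)
    (hs : ∀ l : Fq, s (C l) = i (C l)) :
    ∑ c ∈ nonzeroOfDegreeLT Fq d, s c / i c =
      -∑ j ∈ Finset.range d, ∑ a ∈ monicsOfDegree Fq j, s a / i a := by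
  classical
  have hscalar : ∀ l ∈ Finset.univ.erase (0 : Fq), ∀ m : Fq[X],
      s (C l * m) / i (C l * m) = s m / i m := fun l hl m => by
    rw [map_mul, map_mul, hs]
    exact mul_div_mul_left _ _ <|
      (map_ne_zero_iff i hi).2 <| C_ne_zero.2 (Finset.ne_of_mem_erase hl)
  have hq : (Fintype.card Fq : K) = 0 := by
    rw [← map_natCast i, ← map_natCast C, FiniteField.cast_card_eq_zero, map_zero, map_zero]
  rw [sum_nonzeroOfDegreeLT_eq_sum_C_mul, Finset.sum_congr rfl fun l hl =>
    Finset.sum_congr rfl fun m _ => hscalar l hl m, Finset.sum_const,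
    Finset.card_erase_of_mem (Finset.mem_univ _), Finset.card_univ, nsmul_eq_mul,
    Nat.cast_pred Fintype.card_pos, hq, sum_monicsOfDegreeLT]
  ring

theorem sum_monicsOfDegree_div_add_mul_inv (hi : Function.Injective i)
    (hc : c ∈ nonzeroOfDegreeLT Fq d) :
    ∑ b ∈ monicsOfDegree Fq d, s (b + c) / i (b + c) * (i b)⁻¹ =
      s c / i c * ∑ b ∈ monicsOfDegree Fq d, (i b)⁻¹ := by
  obtain ⟨hc0, hcd⟩ := mem_nonzeroOfDegreeLT.1 hc
  have hne : ∀ a ∈ monicsOfDegree Fq d, i a ≠ 0 := fun a ha =>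
    (map_ne_zero_iff i hi).2 (mem_monicsOfDegree.1 ha).1.ne_zero
  have hic : i c ≠ 0 := (map_ne_zero_iff i hi).2 hc0
  set g : Fq[X] → K := fun x => s x / (i c * i x)
  calc ∑ b ∈ monicsOfDegree Fq d, s (b + c) / i (b + c) * (i b)⁻¹
      = ∑ b ∈ monicsOfDegree Fq d, ((s b + s c) / (i c * i b) - g (b + c)) :=
        Finset.sum_congr rfl fun b hb => by
          have hbc := hne _ (add_mem_monicsOfDegree hb hcd)
          have hb := hne b hb
          simp only [g, map_add] at hbc ⊢
          field_simp
          ring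
    _ = ∑ b ∈ monicsOfDegree Fq d, ((s b + s c) / (i c * i b) - g b) := by
        rw [Finset.sum_sub_distrib, Finset.sum_sub_distrib, sum_monicsOfDegree_add g hcd]
    _ = ∑ b ∈ monicsOfDegree Fq d, s c / i c * (i b)⁻¹ :=
        Finset.sum_congr rfl fun b _ => by simp only [g]; ring
    _ = s c / i c * ∑ b ∈ monicsOfDegree Fq d, (i b)⁻¹ := (Finset.mul_sum ..).symm

theorem sum_monicsOfDegree_div_mul_sum_inv (hi : Function.Injective i)
    (hs : ∀ l : Fq, s (C l) = i (C l)) :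
    (∑ a ∈ monicsOfDegree Fq d, s a / i a) * ∑ b ∈ monicsOfDegree Fq d, (i b)⁻¹ =
      ∑ a ∈ monicsOfDegree Fq d, s a / i a ^ 2 -
        (∑ b ∈ monicsOfDegree Fq d, (i b)⁻¹) *
          ∑ j ∈ Finset.range d, ∑ a ∈ monicsOfDegree Fq j, s a / i a := by
  calc (∑ a ∈ monicsOfDegree Fq d, s a / i a) * ∑ b ∈ monicsOfDegree Fq d, (i b)⁻¹
      = ∑ b ∈ monicsOfDegree Fq d, ∑ a ∈ monicsOfDegree Fq d, s a / i a * (i b)⁻¹ := by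
        simp only [Finset.mul_sum, Finset.sum_mul]
    _ = ∑ b ∈ monicsOfDegree Fq d, (s b / i b ^ 2 +
          ∑ c ∈ nonzeroOfDegreeLT Fq d, s (b + c) / i (b + c) * (i b)⁻¹) :=
        Finset.sum_congr rfl fun b hb => by
          rw [sum_monicsOfDegree_eq_add_sum_nonzeroOfDegreeLT _ hb]
          ring
    _ = ∑ b ∈ monicsOfDegree Fq d, s b / i b ^ 2 +
          ∑ c ∈ nonzeroOfDegreeLT Fq d, s c / i c * ∑ b ∈ monicsOfDegree Fq d, (i b)⁻¹ := by
        rw [Finset.sum_add_distrib, Finset.sum_comm]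
        exact congrArg _ <|
          Finset.sum_congr rfl fun c hc => sum_monicsOfDegree_div_add_mul_inv s hi hc
    _ = _ := by
        rw [← Finset.sum_mul, sum_nonzeroOfDegreeLT_div s hi hs]
        ring

end Sums

end Polynomial

theorem sumShuffle_depth_one_general
    (Fq : Type) [Field Fq] [Fintype Fq]
    (t : RatFunc (RatFunc Fq))
    (ι : Polynomial Fq →+* RatFunc (RatFunc Fq))
    (hι : ι = RatFunc.C.comp (algebraMap (Polynomial Fq) (RatFunc Fq)))
    (Sσ Sone : ℕ → ℕ → RatFunc (RatFunc Fq))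
    (hSσ : ∀ n d, Sσ n d = ∑ᶠ a ∈ {a : Polynomial Fq | a.Monic ∧ a.natDegree = d},
      a.eval₂ (ι.comp Polynomial.C) t / (ι a) ^ n)
    (hSone : ∀ n d, Sone n d = ∑ᶠ a ∈ {a : Polynomial Fq | a.Monic ∧ a.natDegree = d},
      ((ι a) ^ n)⁻¹)
    (d : ℕ) :
    Sσ 1 d * Sone 1 d = Sσ 2 d - Sone 1 d * ∑ i ∈ Finset.range d, Sσ 1 i := by
  have hι_inj : Function.Injective ι := by
    rw [hι, RingHom.coe_comp]
    exact RatFunc.C.injective.comp (IsFractionRing.injective (Polynomial Fq) (RatFunc Fq))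
  let σ := eval₂RingHom (ι.comp C) t
  have hSσ_finset : ∀ n e, Sσ n e = ∑ a ∈ monicsOfDegree Fq e, σ a / ι a ^ n := fun n e => by
    rw [hSσ, ← coe_monicsOfDegree, finsum_mem_coe_finset]
    rfl
  have hSone_finset : ∀ e, Sone 1 e = ∑ b ∈ monicsOfDegree Fq e, (ι b)⁻¹ := fun e => by
    simp only [hSone, ← coe_monicsOfDegree, finsum_mem_coe_finset, pow_one]
  simp only [hSσ_finset, hSone_finset, pow_one]
  exact sum_monicsOfDegree_div_mul_sum_inv σ hι_inj fun l => eval₂_C _ _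

/-- For all `d ≥ 0`, `S_d(1;σ)·S_d(1;1) = S_d(2;σ) − S_d(1;1)·∑_{i=0}^{d-1} S_i(1;σ)`
in `F_q(θ)(t)`, where `S_d(n;σ) = ∑_{a ∈ A⁺(d)} a(t)/aⁿ` and
`S_d(n;1) = ∑_{a ∈ A⁺(d)} 1/aⁿ`. -/
theorem sumShuffle_depth_one
    (Fq : Type) [Field Fq] [Fintype Fq] (q : ℕ) (hq : q = Fintype.card Fq)
    (t : RatFunc (RatFunc Fq)) (ht : t = RatFunc.X)
    (ι : Polynomial Fq →+* RatFunc (RatFunc Fq))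
    (hι : ι = RatFunc.C.comp (algebraMap (Polynomial Fq) (RatFunc Fq)))
    (Sσ Sone : ℕ → ℕ → RatFunc (RatFunc Fq))
    (hSσ : ∀ n d, Sσ n d = ∑ᶠ a ∈ {a : Polynomial Fq | a.Monic ∧ a.natDegree = d},
      a.eval₂ (ι.comp Polynomial.C) t / (ι a) ^ n)
    (hSone : ∀ n d, Sone n d = ∑ᶠ a ∈ {a : Polynomial Fq | a.Monic ∧ a.natDegree = d},
      ((ι a) ^ n)⁻¹)
    (d : ℕ) :
    Sσ 1 d * Sone 1 d = Sσ 2 d - Sone 1 d * ∑ i ∈ Finset.range d, Sσ 1 i :=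
  sumShuffle_depth_one_general Fq t ι hι Sσ Sone hSσ hSone d
end

section
/- For all d ≥ 0, the identity (Σ_{a monic, deg a = d} a(t_1)/a)·(Σ_{a monic, deg a = d} a(t_2)/a) = S_d(2; σψ) − S_d(1;ψ)·Σ_{i=0}^{d-1} S_i(1;σ) − S_d(1;σ)·Σ_{i=0}^{d-1} S_i(1;ψ) holds, where S_d(n; σψ) = Σ_{a monic, deg a = d} a(t_1)a(t_2)/a^n, S_d(1;σ) = Σ a(t_1)/a, S_d(1;ψ) = Σ a(t_2)/a, assuming q > 2. -/
/-!
Write `S_d(σ) = ∑_{a monic, deg a = d} σ(a)/a`. Expanding the product with the partial fractions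
`1/(ab) = 1/((a-b)b) + 1/((b-a)a)` (for `a ≠ b`) turns the off-diagonal part into
`∑_b ψ(b)/b · ∑_{a ≠ b} σ(a)/(a-b)` plus the symmetric term. As `a ≠ b` runs over the monic
polynomials of degree `d`, `c = a - b` runs over the nonzero polynomials of degree `< d`, and
`σ(a) = σ(b) + σ(c)`. Writing `c = u m` with `u ∈ 𝔽_q^×` and `m` monic, `∑ 1/c = (∑_u u⁻¹)(∑_m 1/m)`
vanishes because `q > 2`, while `∑ σ(c)/c = (q - 1) ∑_m σ(m)/m = -∑_{i<d} S_i(σ)`.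
-/

set_option autoImplicit false

open Polynomial Finset

noncomputable section

section Finsets

variable (R : Type*) [Semiring R] [Finite R]

def degreeLTFinset (n : ℕ) : Finset R[X] :=
  haveI : Finite (degreeLT R n) := .of_equiv _ (degreeLTEquiv R n).symm.toEquiv
  (Set.toFinite (degreeLT R n : Set R[X])).toFinset

open scoped Classical in
def monicOfNatDegree (d : ℕ) : Finset R[X] :=
  {p ∈ degreeLTFinset R (d + 1) | p.Monic ∧ p.natDegree = d}

open scoped Classical in
def monicDegreeLT (n : ℕ) : Finset R[X] := {p ∈ degreeLTFinset R n | p.Monic}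

variable {R}

@[simp]
lemma mem_degreeLTFinset {n : ℕ} {p : R[X]} : p ∈ degreeLTFinset R n ↔ p.degree < n := by
  simp [degreeLTFinset, mem_degreeLT]

@[simp]
lemma mem_monicOfNatDegree {d : ℕ} {p : R[X]} :
    p ∈ monicOfNatDegree R d ↔ p.Monic ∧ p.natDegree = d := by
  simp only [monicOfNatDegree, mem_filter, mem_degreeLTFinset, and_iff_right_iff_imp]
  rintro ⟨-, rfl⟩
  exact degree_le_natDegree.trans_lt (by exact_mod_cast p.natDegree.lt_succ_self)

@[simp]
lemma mem_monicDegreeLT {n : ℕ} {p : R[X]} :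
    p ∈ monicDegreeLT R n ↔ p.Monic ∧ p.degree < n := by
  simp [monicDegreeLT, and_comm]

lemma sum_monicDegreeLT [Nontrivial R] {M : Type*} [AddCommMonoid M] (n : ℕ) (g : R[X] → M) :
    ∑ m ∈ monicDegreeLT R n, g m = ∑ i ∈ range n, ∑ m ∈ monicOfNatDegree R i, g m := by
  have natDegree_lt {p : R[X]} (hp : p.Monic) : p.degree < n ↔ p.natDegree < n :=
    (natDegree_lt_iff_degree_lt hp.ne_zero).symm
  rw [← sum_fiberwise_of_maps_to (g := natDegree) (t := range n)]
  · refine sum_congr rfl fun i hi => sum_congr (ext fun p => ?_) fun _ _ => rfl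
    simp only [mem_filter, mem_monicDegreeLT, mem_monicOfNatDegree, and_assoc]
    have := mem_range.mp hi
    constructor
    · rintro ⟨hp, -, rfl⟩; exact ⟨hp, rfl⟩
    · rintro ⟨hp, rfl⟩; exact ⟨hp, (natDegree_lt hp).mpr this, rfl⟩
  · intro p hp
    rw [mem_monicDegreeLT] at hp
    exact mem_range.mpr ((natDegree_lt hp.1).mp hp.2)

end Finsets

section Shift

variable {R : Type*} [Ring R] [Finite R] [Nontrivial R]

lemma sum_monicOfNatDegree_sub {M : Type*} [AddCommMonoid M] {d : ℕ} {b : R[X]}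
    (hb : b ∈ monicOfNatDegree R d) (f : R[X] → M) :
    ∑ a ∈ monicOfNatDegree R d, f (a - b) = ∑ c ∈ degreeLTFinset R d, f c := by
  rw [mem_monicOfNatDegree] at hb
  have hbdeg : b.degree = d := by rw [degree_eq_natDegree hb.1.ne_zero, hb.2]
  refine sum_nbij' (· - b) (· + b) (fun a ha => ?_) (fun c hc => ?_)
    (fun a _ => sub_add_cancel a b) (fun c _ => add_sub_cancel_right c b) fun _ _ => rfl
  · rw [mem_monicOfNatDegree] at ha
    have hadeg : a.degree = d := by rw [degree_eq_natDegree ha.1.ne_zero, ha.2]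
    rw [mem_degreeLTFinset, ← hadeg]
    exact degree_sub_lt_left (hadeg.trans hbdeg.symm) ha.1.ne_zero
      (by rw [ha.1.leadingCoeff, hb.1.leadingCoeff])
  · rw [mem_degreeLTFinset, ← hbdeg] at hc
    rw [mem_monicOfNatDegree, natDegree_add_eq_right_of_degree_lt hc]
    exact ⟨hb.1.add_of_right hc, hb.2⟩

end Shift

section FiniteField

variable {F : Type*} [Field F] [Fintype F] {K : Type*} [Field K]

lemma sum_degreeLTFinset_eq_sum_units_mul [DecidableEq F] {M : Type*} [AddCommMonoid M]
    (n : ℕ) (f : F[X] → M) (hf : f 0 = 0) :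
    ∑ c ∈ degreeLTFinset F n, f c = ∑ u : Fˣ, ∑ m ∈ monicDegreeLT F n, f (C (u : F) * m) := by
  have hinj : Set.InjOn (fun x : Fˣ × F[X] => C (x.1 : F) * x.2)
      ((univ : Finset Fˣ) ×ˢ monicDegreeLT F n : Finset _) := by
    rintro ⟨u, m⟩ hm ⟨u', m'⟩ hm' h
    simp only [coe_product, Set.mem_prod, mem_coe, mem_monicDegreeLT] at hm hm' h
    have hu : u = u' := Units.val_injective <| by
      simpa [hm.2.1.leadingCoeff, hm'.2.1.leadingCoeff] using congrArg leadingCoeff h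
    subst hu
    simpa [u.ne_zero] using h
  have himage : (univ ×ˢ monicDegreeLT F n).image (fun x : Fˣ × F[X] => C (x.1 : F) * x.2)
      = (degreeLTFinset F n).erase 0 := by
    ext c
    simp only [mem_image, mem_product, mem_univ, true_and, mem_monicDegreeLT, mem_erase,
      mem_degreeLTFinset, Prod.exists]
    constructor
    · rintro ⟨u, m, ⟨hm, hdeg⟩, rfl⟩
      exact ⟨mul_ne_zero (C_ne_zero.mpr u.ne_zero) hm.ne_zero, by rwa [degree_C_mul u.ne_zero]⟩
    · rintro ⟨hc, hdeg⟩
      have hlc : c.leadingCoeff ≠ 0 := leadingCoeff_ne_zero.mpr hc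
      refine ⟨Units.mk0 _ hlc, c * C c.leadingCoeff⁻¹, ⟨monic_mul_leadingCoeff_inv hc, ?_⟩, ?_⟩
      · rwa [degree_mul_C (inv_ne_zero hlc)]
      · rw [Units.val_mk0, mul_left_comm, ← C_mul, mul_inv_cancel₀ hlc, C_1, mul_one]
  rw [← sum_erase _ hf, ← himage, sum_image hinj, sum_product]

lemma natCast_card_eq_zero (ι : F[X] →+* K) : (Fintype.card F : K) = 0 := by
  rw [← map_natCast (ι.comp C), FiniteField.cast_card_eq_zero, map_zero]

lemma sum_units_inv_eq_zero [DecidableEq F] (hq : 2 < Fintype.card F) :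
    ∑ u : Fˣ, (u : F)⁻¹ = 0 := by
  rw [Fintype.sum_equiv (Equiv.inv Fˣ) _ (fun u => (u : F))
    fun u => (Units.val_inv_eq_inv_val u).symm]
  simpa [Nat.dvd_one, hq.ne'] using FiniteField.sum_pow_units F 1

lemma sum_inv_degreeLTFinset (hq : 2 < Fintype.card F) (ι : F[X] →+* K) (n : ℕ) :
    ∑ c ∈ degreeLTFinset F n, (ι c)⁻¹ = 0 := by
  classical
  rw [sum_degreeLTFinset_eq_sum_units_mul n _ (by simp)]
  simp only [map_mul, mul_inv, ← mul_sum, ← sum_mul]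
  have h : ∑ u : Fˣ, (ι (C (u : F)))⁻¹ = (ι.comp C) (∑ u : Fˣ, (u : F)⁻¹) := by
    simp [map_sum, map_inv₀]
  rw [h, sum_units_inv_eq_zero hq, map_zero, zero_mul]

lemma sum_div_degreeLTFinset (ι σ : F[X] →+* K) (hσ : σ.comp C = ι.comp C) (n : ℕ) :
    ∑ c ∈ degreeLTFinset F n, σ c / ι c
      = -∑ i ∈ range n, ∑ m ∈ monicOfNatDegree F i, σ m / ι m := by
  classical
  rw [sum_degreeLTFinset_eq_sum_units_mul n _ (by simp)]
  have hscale (u : Fˣ) (m : F[X]) : σ (C (u : F) * m) / ι (C (u : F) * m) = σ m / ι m := by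
    have hu : ι (C (u : F)) ≠ 0 := by simpa using (ι.comp C).injective.ne u.ne_zero
    rw [map_mul, map_mul, ← RingHom.comp_apply σ, hσ, RingHom.comp_apply, mul_div_mul_left _ _ hu]
  simp only [hscale, sum_const, card_univ, Fintype.card_units, nsmul_eq_mul, sum_monicDegreeLT]
  rw [Nat.cast_sub Fintype.card_pos, natCast_card_eq_zero ι, Nat.cast_one, zero_sub, neg_one_mul]

lemma sum_monicOfNatDegree_div_sub (hq : 2 < Fintype.card F) (ι σ : F[X] →+* K)
    (hσ : σ.comp C = ι.comp C) {d : ℕ} {b : F[X]} (hb : b ∈ monicOfNatDegree F d) :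
    ∑ a ∈ monicOfNatDegree F d, σ a / ι (a - b)
      = -∑ i ∈ range d, ∑ m ∈ monicOfNatDegree F i, σ m / ι m := by
  -- the term `a = b` is `σ b / 0 = 0`, as is the term `c = 0` of the sums over `degreeLTFinset`
  have hsplit (a : F[X]) : σ a / ι (a - b) = σ b * (ι (a - b))⁻¹ + σ (a - b) / ι (a - b) := by
    rw [← div_eq_mul_inv, ← add_div, ← map_add, add_sub_cancel]
  simp only [hsplit, sum_add_distrib, ← mul_sum]
  rw [sum_monicOfNatDegree_sub hb (fun c => (ι c)⁻¹), sum_inv_degreeLTFinset hq,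
    sum_monicOfNatDegree_sub hb (fun c => σ c / ι c), sum_div_degreeLTFinset ι σ hσ, mul_zero,
    zero_add]

-- At `x = y` the two fractions are the junk value `0`, and the last term takes over.
lemma div_mul_div_eq_add_ite [DecidableEq K] {x y : K} (s t : K) (hx : x ≠ 0) (hy : y ≠ 0) :
    s / x * (t / y) = t / y * (s / (x - y)) + s / x * (t / (y - x))
      + if x = y then s * t / (x * y) else 0 := by
  by_cases hxy : x = y
  · subst hxy
    rw [sub_self, div_zero, div_zero, mul_zero, mul_zero, zero_add, zero_add, if_pos rfl,
      div_mul_div_comm]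
  · rw [if_neg hxy, add_zero]
    field_simp [sub_ne_zero.mpr hxy, sub_ne_zero.mpr (Ne.symm hxy)]
    ring

theorem sum_mul_sum_monicOfNatDegree (hq : 2 < Fintype.card F) (ι σ ψ : F[X] →+* K)
    (hι : Function.Injective ι) (hσ : σ.comp C = ι.comp C) (hψ : ψ.comp C = ι.comp C) (d : ℕ) :
    (∑ a ∈ monicOfNatDegree F d, σ a / ι a) * (∑ b ∈ monicOfNatDegree F d, ψ b / ι b)
      = ∑ a ∈ monicOfNatDegree F d, σ a * ψ a / ι a ^ 2
        - (∑ b ∈ monicOfNatDegree F d, ψ b / ι b)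
          * ∑ i ∈ range d, ∑ m ∈ monicOfNatDegree F i, σ m / ι m
        - (∑ a ∈ monicOfNatDegree F d, σ a / ι a)
          * ∑ i ∈ range d, ∑ m ∈ monicOfNatDegree F i, ψ m / ι m := by
  classical
  set M := monicOfNatDegree F d
  have hne {a : F[X]} (ha : a ∈ M) : ι a ≠ 0 :=
    (map_ne_zero_iff ι hι).mpr (mem_monicOfNatDegree.mp ha).1.ne_zero
  have hpartial (a) (ha : a ∈ M) (b) (hb : b ∈ M) : σ a / ι a * (ψ b / ι b)
      = ψ b / ι b * (σ a / ι (a - b)) + σ a / ι a * (ψ b / ι (b - a))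
        + if a = b then σ a * ψ b / (ι a * ι b) else 0 := by
    simpa only [map_sub, hι.eq_iff] using div_mul_div_eq_add_ite (σ a) (ψ b) (hne ha) (hne hb)
  have hleft : ∑ a ∈ M, ∑ b ∈ M, ψ b / ι b * (σ a / ι (a - b))
      = -((∑ b ∈ M, ψ b / ι b) * ∑ i ∈ range d, ∑ m ∈ monicOfNatDegree F i, σ m / ι m) := by
    rw [sum_comm, sum_mul, ← sum_neg_distrib]
    refine sum_congr rfl fun b hb => ?_
    rw [← mul_sum, sum_monicOfNatDegree_div_sub hq ι σ hσ hb, mul_neg]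
  have hright : ∑ a ∈ M, ∑ b ∈ M, σ a / ι a * (ψ b / ι (b - a))
      = -((∑ a ∈ M, σ a / ι a) * ∑ i ∈ range d, ∑ m ∈ monicOfNatDegree F i, ψ m / ι m) := by
    rw [sum_mul, ← sum_neg_distrib]
    refine sum_congr rfl fun a ha => ?_
    rw [← mul_sum, sum_monicOfNatDegree_div_sub hq ι ψ hψ ha, mul_neg]
  have hdiag : ∑ a ∈ M, ∑ b ∈ M, (if a = b then σ a * ψ b / (ι a * ι b) else 0)
      = ∑ a ∈ M, σ a * ψ a / ι a ^ 2 :=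
    sum_congr rfl fun a ha => by rw [sum_ite_eq, if_pos ha, sq]
  rw [sum_mul_sum, sum_congr rfl fun a ha => sum_congr rfl (hpartial a ha)]
  simp only [sum_add_distrib]
  rw [hleft, hright, hdiag]
  ring

end FiniteField

lemma finsum_mem_monic_natDegree_eq_sum {R M : Type*} [Semiring R] [Finite R] [AddCommMonoid M]
    (d : ℕ) (f : R[X] → M) :
    ∑ᶠ a ∈ {a : R[X] | a.Monic ∧ a.natDegree = d}, f a = ∑ a ∈ monicOfNatDegree R d, f a := by
  rw [← finsum_mem_coe_finset]
  congr 1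
  ext a
  simp

end

theorem sumShuffle_two_vars_general
    (Fq : Type) [Field Fq] [Fintype Fq] (q : ℕ) (hq : q = Fintype.card Fq) (hq2 : 2 < q)
    (t₁ t₂ : RatFunc (RatFunc (RatFunc Fq)))
    (ι : Polynomial Fq →+* RatFunc (RatFunc (RatFunc Fq)))
    (hι : ι = RatFunc.C.comp (RatFunc.C.comp (algebraMap (Polynomial Fq) (RatFunc Fq))))
    (Sσ Sψ Sσψ : ℕ → ℕ → RatFunc (RatFunc (RatFunc Fq)))
    (hSσ : ∀ n d, Sσ n d = ∑ᶠ a ∈ {a : Polynomial Fq | a.Monic ∧ a.natDegree = d},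
      a.eval₂ (ι.comp Polynomial.C) t₁ / (ι a) ^ n)
    (hSψ : ∀ n d, Sψ n d = ∑ᶠ a ∈ {a : Polynomial Fq | a.Monic ∧ a.natDegree = d},
      a.eval₂ (ι.comp Polynomial.C) t₂ / (ι a) ^ n)
    (hSσψ : ∀ n d, Sσψ n d = ∑ᶠ a ∈ {a : Polynomial Fq | a.Monic ∧ a.natDegree = d},
      a.eval₂ (ι.comp Polynomial.C) t₁ * a.eval₂ (ι.comp Polynomial.C) t₂ / (ι a) ^ n)
    (d : ℕ) :
    Sσ 1 d * Sψ 1 d =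
      Sσψ 2 d - Sψ 1 d * ∑ i ∈ Finset.range d, Sσ 1 i
        - Sσ 1 d * ∑ i ∈ Finset.range d, Sψ 1 i := by
  have hinj : Function.Injective ι := by
    rw [hι]
    exact RatFunc.C.injective.comp (RatFunc.C.injective.comp (RatFunc.algebraMap_injective Fq))
  have hconst (t) : (eval₂RingHom (ι.comp C) t).comp C = ι.comp C :=
    RingHom.ext fun _ => eval₂_C _ _
  simp only [hSσ, hSψ, hSσψ, finsum_mem_monic_natDegree_eq_sum, pow_one]
  exact sum_mul_sum_monicOfNatDegree (hq ▸ hq2) ι _ _ hinj (hconst t₁) (hconst t₂) d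

/-- For `q > 2` and all `d ≥ 0`,
`S_d(1;σ)·S_d(1;ψ) = S_d(2;σψ) − S_d(1;ψ)·∑_{i<d} S_i(1;σ) − S_d(1;σ)·∑_{i<d} S_i(1;ψ)`
in `F_q(θ)(t₁,t₂)`, where `σ : a ↦ a(t₁)`, `ψ : a ↦ a(t₂)`. -/
theorem sumShuffle_two_vars
    (Fq : Type) [Field Fq] [Fintype Fq] (q : ℕ) (hq : q = Fintype.card Fq) (hq2 : 2 < q)
    (t₁ t₂ : RatFunc (RatFunc (RatFunc Fq)))
    (ht₁ : t₁ = RatFunc.C (RatFunc.X : RatFunc (RatFunc Fq))) (ht₂ : t₂ = RatFunc.X)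
    (ι : Polynomial Fq →+* RatFunc (RatFunc (RatFunc Fq)))
    (hι : ι = RatFunc.C.comp (RatFunc.C.comp (algebraMap (Polynomial Fq) (RatFunc Fq))))
    (Sσ Sψ Sσψ : ℕ → ℕ → RatFunc (RatFunc (RatFunc Fq)))
    (hSσ : ∀ n d, Sσ n d = ∑ᶠ a ∈ {a : Polynomial Fq | a.Monic ∧ a.natDegree = d},
      a.eval₂ (ι.comp Polynomial.C) t₁ / (ι a) ^ n)
    (hSψ : ∀ n d, Sψ n d = ∑ᶠ a ∈ {a : Polynomial Fq | a.Monic ∧ a.natDegree = d},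
      a.eval₂ (ι.comp Polynomial.C) t₂ / (ι a) ^ n)
    (hSσψ : ∀ n d, Sσψ n d = ∑ᶠ a ∈ {a : Polynomial Fq | a.Monic ∧ a.natDegree = d},
      a.eval₂ (ι.comp Polynomial.C) t₁ * a.eval₂ (ι.comp Polynomial.C) t₂ / (ι a) ^ n)
    (d : ℕ) :
    Sσ 1 d * Sψ 1 d =
      Sσψ 2 d - Sψ 1 d * ∑ i ∈ Finset.range d, Sσ 1 i
        - Sσ 1 d * ∑ i ∈ Finset.range d, Sψ 1 i :=
  sumShuffle_two_vars_general Fq q hq hq2 t₁ t₂ ι hι Sσ Sψ Sσψ hSσ hSψ hSσψ d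
end

section
/- Let q > 2 and let P be a monic irreducible polynomial in F_q[θ] of degree d. Then BG_{q^d − 2} ≡ Σ_{i=0}^{d−1} 1/l_i (mod P), i.e., P divides l_{d−1}·BG_{q^d−2} − l_{d−1}·Σ_{i=0}^{d−1} l_i^{−1} (both sides made integral by multiplying by l_{d−1}). -/
/-!
Work in the residue field `K = F_q[θ]/(P)`, which has `q^d` elements and a power basis
`1, θ, …, θ^(d-1)`. A monic `a` of degree `k < d` is nonzero in `K`, so `a^(q^d-2) = a⁻¹` there;
the monic polynomials of degree `d` run over all of `K`, so their layer contributes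
`∑_{x ∈ K} x^(q^d-2) = 0`. What remains is Carlitz's identity `∑_{a monic, deg a = k} 1/a = 1/l_k`.
Put `e_k(x) = ∏_{deg v < k} (x + v)`. Since `∏_{b ∈ F_q} (y + b z) = y^q - z^(q-1) y`, `e_k` is
`F_q`-linear with `e_{k+1}(x) = e_k(x)^q - e_k(θ^k)^(q-1) e_k(x)`, and the matching partial-fraction
identity makes `e_k(x) · ∑_{deg v < k} 1/(x + v)` a constant `Δ_k`. Writing `e_k(θ^(k+r))` as a
complete homogeneous symmetric polynomial in `θ, θ^q, …, θ^(q^k)` times `e_k(θ^k)` gives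
`e_{k+1}(θ^(k+1)) = (θ^(q^(k+1)) - θ) e_k(θ^k)^q`, and hence `l_k Δ_k = e_k(θ^k)`.
-/

set_option autoImplicit false

open Polynomial Finset

section CompleteHomogeneous

variable {R S : Type*} [CommRing R] [CommRing S]

/-- `completeHom x k r` is the complete homogeneous symmetric polynomial of degree `r`
evaluated at `x 0, …, x k`. -/
def completeHom (x : ℕ → R) : ℕ → ℕ → R
  | 0, r => x 0 ^ r
  | k + 1, r => ∑ p ∈ antidiagonal r, x (k + 1) ^ p.1 * completeHom x k p.2

variable (x : ℕ → R)

@[simp]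
lemma completeHom_zero_left (r : ℕ) : completeHom x 0 r = x 0 ^ r := rfl

lemma completeHom_succ_left (k r : ℕ) :
    completeHom x (k + 1) r = ∑ p ∈ antidiagonal r, x (k + 1) ^ p.1 * completeHom x k p.2 := rfl

@[simp]
lemma completeHom_zero_right (k : ℕ) : completeHom x k 0 = 1 := by
  induction k with
  | zero => simp
  | succ k ih => simp [completeHom_succ_left, ih]

lemma completeHom_succ_succ (k r : ℕ) :
    completeHom x (k + 1) (r + 1) =
      completeHom x k (r + 1) + x (k + 1) * completeHom x (k + 1) r := by
  simp only [completeHom_succ_left, Nat.sum_antidiagonal_succ, pow_zero, one_mul, mul_sum, pow_succ]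
  congr 1
  refine sum_congr rfl fun p _ => by ring

lemma completeHom_succ_succ' (k r : ℕ) :
    completeHom x (k + 1) (r + 1)
      = completeHom (fun i => x (i + 1)) k (r + 1) + x 0 * completeHom x (k + 1) r := by
  induction k generalizing r with
  | zero =>
    simp only [completeHom_succ_left, Nat.sum_antidiagonal_succ', completeHom_zero_left, pow_zero,
      mul_one, mul_sum, pow_succ]
    congr 1
    refine sum_congr rfl fun p _ => by ring
  | succ k ih =>
    rw [completeHom_succ_left x (k + 1), Nat.sum_antidiagonal_succ']
    simp only [ih, completeHom_zero_right, mul_add, sum_add_distrib]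
    rw [completeHom_succ_left (fun i => x (i + 1)) k, Nat.sum_antidiagonal_succ',
      completeHom_succ_left x (k + 1) r, mul_sum, ← add_assoc]
    simp only [completeHom_zero_right, mul_one]
    congr 1
    exact sum_congr rfl fun p _ => by ring

lemma completeHom_shift_sub (k r : ℕ) :
    completeHom (fun i => x (i + 1)) k (r + 1) - completeHom x k (r + 1)
      = (x (k + 1) - x 0) * completeHom x (k + 1) r := by
  linear_combination completeHom_succ_succ x k r - completeHom_succ_succ' x k r

lemma map_completeHom (φ : R →+* S) (k r : ℕ) :
    φ (completeHom x k r) = completeHom (fun i => φ (x i)) k r := by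
  induction k generalizing r with
  | zero => simp
  | succ k ih => simp [completeHom_succ_left, ih]

end CompleteHomogeneous

section SumSmulPow

variable {R A B : Type*} [CommSemiring R] [Semiring A] [Algebra R A] [Semiring B] [Algebra R B]

def sumSmulPow (t : A) {k : ℕ} (c : Fin k → R) : A := ∑ i, c i • t ^ (i : ℕ)

lemma map_sumSmulPow (φ : A →ₐ[R] B) (t : A) {k : ℕ} (c : Fin k → R) :
    φ (sumSmulPow t c) = sumSmulPow (φ t) c := by
  simp [sumSmulPow]

lemma sumSmulPow_snoc (t : A) {k : ℕ} (c : Fin k → R) (b : R) :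
    sumSmulPow t (Fin.snoc c b : Fin (k + 1) → R) = sumSmulPow t c + b • t ^ k := by
  simp [sumSmulPow, Fin.sum_univ_castSucc]

variable [Fintype R] {M : Type*} (t : A) (f : A → M) (k : ℕ)

lemma prod_sumSmulPow_succ [CommMonoid M] : ∏ c : Fin (k + 1) → R, f (sumSmulPow t c) =
    ∏ b : R, ∏ c : Fin k → R, f (sumSmulPow t c + b • t ^ k) := by
  rw [← (Fin.snocEquiv fun _ => R).prod_comp, Fintype.prod_prod_type]
  simp [Fin.snocEquiv, sumSmulPow_snoc]

lemma sum_sumSmulPow_succ [AddCommMonoid M] : ∑ c : Fin (k + 1) → R, f (sumSmulPow t c) =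
    ∑ b : R, ∑ c : Fin k → R, f (sumSmulPow t c + b • t ^ k) := by
  rw [← (Fin.snocEquiv fun _ => R).sum_comp, Fintype.sum_prod_type]
  simp [Fin.snocEquiv, sumSmulPow_snoc]

end SumSmulPow

section FiniteField

variable {Fq K : Type*} [Field Fq] [Fintype Fq] [Field K] [Algebra Fq K]

lemma FiniteField.prod_X_add_C : ∏ b : Fq, (X + C b) = X ^ Fintype.card Fq - X := by
  have hq := Fintype.one_lt_card (α := Fq)
  have hmonic : (X ^ Fintype.card Fq - X : Fq[X]).Monic :=
    monic_X_pow_sub (degree_X_le.trans_lt (by exact_mod_cast hq))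
  have hroots := FiniteField.roots_X_pow_card_sub_X Fq
  have h := prod_multiset_X_sub_C_of_monic_of_roots_card_eq hmonic
    (by rw [hroots, FiniteField.X_pow_card_sub_X_natDegree_eq Fq hq]; rfl)
  rw [hroots] at h
  rw [← h, Fintype.prod_equiv (Equiv.neg Fq) _ (fun b => X - C b) (by simp [sub_eq_add_neg])]
  rfl

lemma FiniteField.prod_add_algebraMap (w : K) :
    ∏ b : Fq, (w + algebraMap Fq K b) = w ^ Fintype.card Fq - w := by
  simpa using congrArg (aeval w) (FiniteField.prod_X_add_C (Fq := Fq))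

lemma FiniteField.sum_prod_erase_add_algebraMap [DecidableEq Fq] (w : K) :
    ∑ b : Fq, ∏ b' ∈ univ.erase b, (w + algebraMap Fq K b') = -1 := by
  have h := congrArg derivative (FiniteField.prod_X_add_C (Fq := Fq))
  rw [derivative_prod_finset (s := univ) (f := fun b => X + C b), derivative_sub,
    derivative_X_pow, derivative_X, FiniteField.cast_card_eq_zero] at h
  simpa using congrArg (aeval w) h

lemma FiniteField.sum_inv_add_algebraMap_mul (w : K) (hw : ∀ b : Fq, w + algebraMap Fq K b ≠ 0) :
    (∑ b : Fq, (w + algebraMap Fq K b)⁻¹) * (w ^ Fintype.card Fq - w) = -1 := by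
  classical
  rw [← FiniteField.prod_add_algebraMap, ← FiniteField.sum_prod_erase_add_algebraMap (Fq := Fq) w,
    sum_mul]
  refine sum_congr rfl fun b _ => ?_
  rw [← mul_prod_erase univ _ (mem_univ b), ← mul_assoc, inv_mul_cancel₀ (hw b), one_mul]

lemma FiniteField.prod_add_smul (y z : K) :
    ∏ b : Fq, (y + b • z) = y ^ Fintype.card Fq - z ^ (Fintype.card Fq - 1) * y := by
  have hq : Fintype.card Fq ≠ 0 := Fintype.card_ne_zero
  rcases eq_or_ne z 0 with rfl | hz
  · simp [zero_pow (Nat.sub_ne_zero_of_lt Fintype.one_lt_card)]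
  obtain ⟨w, rfl⟩ : ∃ w, y = z * w := ⟨y / z, by field_simp⟩
  have hscale (b : Fq) : z * w + b • z = z * (w + algebraMap Fq K b) := by
    rw [Algebra.smul_def]; ring
  rw [prod_congr rfl fun b _ => hscale b, prod_mul_distrib, prod_const, card_univ,
    FiniteField.prod_add_algebraMap, mul_pow, ← pow_sub_one_mul hq z]
  ring

lemma FiniteField.sum_inv_add_smul_mul (y z : K) (h : ∀ b : Fq, y + b • z ≠ 0) :
    (∑ b : Fq, (y + b • z)⁻¹) * (y ^ Fintype.card Fq - z ^ (Fintype.card Fq - 1) * y) =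
      -z ^ (Fintype.card Fq - 1) := by
  have hq : Fintype.card Fq ≠ 0 := Fintype.card_ne_zero
  rcases eq_or_ne z 0 with rfl | hz
  · simp only [smul_zero, add_zero, sum_const, card_univ,
      zero_pow (Nat.sub_ne_zero_of_lt Fintype.one_lt_card)]
    rw [← Nat.cast_smul_eq_nsmul Fq, FiniteField.cast_card_eq_zero, zero_smul, zero_mul, neg_zero]
  obtain ⟨w, rfl⟩ : ∃ w, y = z * w := ⟨y / z, by field_simp⟩
  have hscale (b : Fq) : z * w + b • z = z * (w + algebraMap Fq K b) := by
    rw [Algebra.smul_def]; ring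
  simp_rw [hscale] at h ⊢
  simp_rw [mul_inv]
  rw [← mul_sum]
  calc z⁻¹ * (∑ b : Fq, (w + algebraMap Fq K b)⁻¹) *
        ((z * w) ^ Fintype.card Fq - z ^ (Fintype.card Fq - 1) * (z * w))
      = z ^ (Fintype.card Fq - 1) * (z⁻¹ * z) *
          ((∑ b : Fq, (w + algebraMap Fq K b)⁻¹) * (w ^ Fintype.card Fq - w)) := by
        rw [mul_pow, ← pow_sub_one_mul hq z]; ring
    _ = -z ^ (Fintype.card Fq - 1) := by
        rw [inv_mul_cancel₀ hz, FiniteField.sum_inv_add_algebraMap_mul w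
          fun b => right_ne_zero_of_mul (h b)]
        ring

end FiniteField

def carlitzL {R : Type*} [CommRing R] (q : ℕ) (t : R) (k : ℕ) : R :=
  ∏ j ∈ range k, (t - t ^ q ^ (j + 1))

lemma map_carlitzL {R S : Type*} [CommRing R] [CommRing S] (φ : R →+* S) (q : ℕ) (t : R) (k : ℕ) :
    φ (carlitzL q t k) = carlitzL q (φ t) k := by
  simp [carlitzL, map_prod]

lemma carlitzL_mul_prod_Ico {R : Type*} [CommRing R] (q : ℕ) (t : R) {m n : ℕ} (h : m ≤ n) :
    carlitzL q t m * ∏ j ∈ Ico m n, (t - t ^ q ^ (j + 1)) = carlitzL q t n :=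
  prod_range_mul_prod_Ico _ h

lemma eq_map_carlitzL {R S : Type*} [CommRing R] [CommRing S] (φ : R →+* S) (q : ℕ) (t : R)
    {l : ℕ → S} (hl0 : l 0 = 1) (hl : ∀ i, l (i + 1) = (φ t - φ t ^ q ^ (i + 1)) * l i) (i : ℕ) :
    l i = φ (carlitzL q t i) := by
  induction i with
  | zero => simp [hl0, carlitzL]
  | succ i ih =>
    rw [hl, ih, map_carlitzL, map_carlitzL, carlitzL, carlitzL, prod_range_succ, mul_comm]

section Carlitz

variable (Fq : Type*) {K : Type*} [Field Fq] [Fintype Fq] [Field K] [Algebra Fq K]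

def carlitzE (t : K) (k : ℕ) (x : K) : K := ∏ c : Fin k → Fq, (x + sumSmulPow t c)

variable {Fq} (t : K)

@[simp]
lemma carlitzE_zero (x : K) : carlitzE Fq t 0 x = x := by
  simp [carlitzE, sumSmulPow]

lemma carlitzE_succ_eq_prod (k : ℕ) (x : K) :
    carlitzE Fq t (k + 1) x = ∏ b : Fq, carlitzE Fq t k (x + b • t ^ k) := by
  simp only [carlitzE, prod_sumSmulPow_succ t (x + ·), add_right_comm, add_assoc]

lemma carlitzE_succ_of_isLinearMap {k : ℕ} (hk : IsLinearMap Fq (carlitzE Fq t k)) (x : K) :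
    carlitzE Fq t (k + 1) x = carlitzE Fq t k x ^ Fintype.card Fq -
      carlitzE Fq t k (t ^ k) ^ (Fintype.card Fq - 1) * carlitzE Fq t k x := by
  simp only [carlitzE_succ_eq_prod, hk.map_add, hk.map_smul, FiniteField.prod_add_smul]

lemma isLinearMap_carlitzE (k : ℕ) : IsLinearMap Fq (carlitzE Fq t k) := by
  induction k with
  | zero => exact ⟨by simp, by simp⟩
  | succ k ih =>
    have frob_add (a b : K) := map_add (FiniteField.frobeniusAlgHom Fq K) a b
    have frob_smul (b : Fq) (a : K) := map_smul (FiniteField.frobeniusAlgHom Fq K) b a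
    simp only [FiniteField.frobeniusAlgHom_apply] at frob_add frob_smul
    refine ⟨fun x y => ?_, fun b x => ?_⟩
    · simp only [carlitzE_succ_of_isLinearMap t ih, ih.map_add, frob_add]
      ring
    · simp only [carlitzE_succ_of_isLinearMap t ih, ih.map_smul, frob_smul, smul_sub,
        mul_smul_comm]

lemma carlitzE_succ (k : ℕ) (x : K) :
    carlitzE Fq t (k + 1) x = carlitzE Fq t k x ^ Fintype.card Fq -
      carlitzE Fq t k (t ^ k) ^ (Fintype.card Fq - 1) * carlitzE Fq t k x :=
  carlitzE_succ_of_isLinearMap t (isLinearMap_carlitzE t k) x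

lemma carlitzE_succ_pow_add {k r : ℕ}
    (h : carlitzE Fq t k (t ^ (k + (r + 1))) =
      completeHom (fun i => t ^ Fintype.card Fq ^ i) k (r + 1) * carlitzE Fq t k (t ^ k)) :
    carlitzE Fq t (k + 1) (t ^ (k + 1 + r)) = (t ^ Fintype.card Fq ^ (k + 1) - t) *
      completeHom (fun i => t ^ Fintype.card Fq ^ i) (k + 1) r *
        carlitzE Fq t k (t ^ k) ^ Fintype.card Fq := by
  set q := Fintype.card Fq
  set x : ℕ → K := fun i => t ^ q ^ i
  set z := carlitzE Fq t k (t ^ k)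
  have hfrob : completeHom x k (r + 1) ^ q = completeHom (fun i => x (i + 1)) k (r + 1) := by
    simpa [x, ← pow_mul, pow_succ] using
      map_completeHom x (FiniteField.frobeniusAlgHom Fq K).toRingHom k (r + 1)
  have hz : z ^ (q - 1) * (completeHom x k (r + 1) * z) = completeHom x k (r + 1) * z ^ q := by
    rw [← pow_sub_one_mul Fintype.card_ne_zero z]; ring
  rw [show k + 1 + r = k + (r + 1) by ring, carlitzE_succ, h, mul_pow, hfrob, hz]
  linear_combination z ^ q * completeHom_shift_sub x k r

lemma carlitzE_pow_add (k r : ℕ) : carlitzE Fq t k (t ^ (k + r)) =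
    completeHom (fun i => t ^ Fintype.card Fq ^ i) k r * carlitzE Fq t k (t ^ k) := by
  induction k generalizing r with
  | zero => simp
  | succ k ih =>
    have hself := carlitzE_succ_pow_add (r := 0) t (ih 1)
    rw [add_zero, completeHom_zero_right, mul_one] at hself
    rw [carlitzE_succ_pow_add t (ih (r + 1)), hself]
    ring

lemma carlitzE_succ_self (k : ℕ) : carlitzE Fq t (k + 1) (t ^ (k + 1)) =
    (t ^ Fintype.card Fq ^ (k + 1) - t) * carlitzE Fq t k (t ^ k) ^ Fintype.card Fq := by
  simpa using carlitzE_succ_pow_add (r := 0) t (carlitzE_pow_add t k 1)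

lemma sum_inv_mul_carlitzE (k : ℕ) (x : K) (hx : carlitzE Fq t k x ≠ 0) :
    (∑ c : Fin k → Fq, (x + sumSmulPow t c)⁻¹) * carlitzE Fq t k x =
      (-1) ^ k * ∏ j ∈ range k, carlitzE Fq t j (t ^ j) ^ (Fintype.card Fq - 1) := by
  induction k generalizing x with
  | zero => simpa [sumSmulPow] using inv_mul_cancel₀ (by simpa using hx)
  | succ k ih =>
    have hlin := isLinearMap_carlitzE (Fq := Fq) t k
    have hne (b : Fq) : carlitzE Fq t k (x + b • t ^ k) ≠ 0 := by
      rw [carlitzE_succ_eq_prod, prod_ne_zero_iff] at hx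
      exact hx b (mem_univ b)
    have hsum : ∑ c : Fin (k + 1) → Fq, (x + sumSmulPow t c)⁻¹ =
        ((-1) ^ k * ∏ j ∈ range k, carlitzE Fq t j (t ^ j) ^ (Fintype.card Fq - 1)) *
          ∑ b : Fq, (carlitzE Fq t k x + b • carlitzE Fq t k (t ^ k))⁻¹ := by
      rw [sum_sumSmulPow_succ t (fun a => (x + a)⁻¹), mul_sum]
      refine sum_congr rfl fun b _ => ?_
      rw [← hlin.map_smul, ← hlin.map_add, ← ih _ (hne b), mul_inv_cancel_right₀ (hne b)]
      simp only [add_right_comm, add_assoc]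
    rw [hsum, carlitzE_succ, mul_assoc, FiniteField.sum_inv_add_smul_mul _ _
      fun b => by simpa [hlin.map_add, hlin.map_smul] using hne b, prod_range_succ,
      pow_succ]
    ring

lemma carlitzL_mul_sign_mul_prod (k : ℕ) :
    carlitzL (Fintype.card Fq) t k *
      ((-1) ^ k * ∏ j ∈ range k, carlitzE Fq t j (t ^ j) ^ (Fintype.card Fq - 1)) =
        carlitzE Fq t k (t ^ k) := by
  induction k with
  | zero => simp [carlitzL]
  | succ k ih =>
    rw [carlitzL, prod_range_succ, ← carlitzL, prod_range_succ, carlitzE_succ_self,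
      ← pow_sub_one_mul Fintype.card_ne_zero (carlitzE Fq t k (t ^ k)), ← ih]
    ring

lemma carlitzL_mul_sum_inv (k : ℕ) (hk : carlitzE Fq t k (t ^ k) ≠ 0) :
    carlitzL (Fintype.card Fq) t k * ∑ c : Fin k → Fq, (t ^ k + sumSmulPow t c)⁻¹ = 1 := by
  apply mul_right_cancel₀ hk
  rw [mul_assoc, sum_inv_mul_carlitzE t k _ hk, carlitzL_mul_sign_mul_prod, one_mul]

end Carlitz

section MonicPolynomials

variable {R : Type*} [CommRing R] [Nontrivial R]

noncomputable def monicEquivFun (k : ℕ) :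
    (Fin k → R) ≃ {p : R[X] | p.Monic ∧ p.natDegree = k} :=
  ((monicEquivDegreeLT k).trans (degreeLTEquiv R k).toEquiv).symm

lemma coe_monicEquivFun (k : ℕ) (c : Fin k → R) :
    (monicEquivFun k c : R[X]) = X ^ k + sumSmulPow X c := by
  simp [monicEquivFun, monicEquivDegreeLT, degreeLTEquiv, sumSmulPow, smul_X_eq_monomial]

lemma finsum_mem_monic_natDegree_eq [Fintype R] {M : Type*} [AddCommMonoid M] (f : R[X] → M)
    (k : ℕ) : ∑ᶠ a ∈ {a : R[X] | a.Monic ∧ a.natDegree = k}, f a =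
      ∑ c : Fin k → R, f (X ^ k + sumSmulPow X c) := by
  rw [← finsum_set_coe_eq_finsum_mem, ← finsum_comp_equiv (monicEquivFun k),
    finsum_eq_sum_of_fintype]
  simp [coe_monicEquivFun]

end MonicPolynomials

lemma FiniteField.pow_card_sub_two_eq_inv {K : Type*} [Field K] [Fintype K] {a : K} (ha : a ≠ 0) :
    a ^ (Fintype.card K - 2) = a⁻¹ := by
  refine eq_inv_of_mul_eq_one_left ?_
  rw [← pow_succ, ← FiniteField.pow_card_sub_one_eq_one a ha]
  congr 1
  have := Fintype.one_lt_card (α := K)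
  omega

section PowerBasis

variable {Fq K : Type*} [Field Fq] [Field K] [Algebra Fq K] (pb : PowerBasis Fq K)

lemma PowerBasis.gen_pow_add_sumSmulPow_ne_zero {k : ℕ} (hk : k < pb.dim) (c : Fin k → Fq) :
    pb.gen ^ k + sumSmulPow pb.gen c ≠ 0 := by
  obtain ⟨hmonic, hdeg⟩ := coe_monicEquivFun k c ▸ (monicEquivFun k c).2
  intro h
  have := pb.dim_le_natDegree_of_root hmonic.ne_zero (by simpa [map_sumSmulPow] using h)
  omega

variable [Fintype Fq]

lemma PowerBasis.carlitzL_gen_mul_sum_inv {k : ℕ} (hk : k < pb.dim) :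
    carlitzL (Fintype.card Fq) pb.gen k *
      ∑ c : Fin k → Fq, (pb.gen ^ k + sumSmulPow pb.gen c)⁻¹ = 1 :=
  carlitzL_mul_sum_inv pb.gen k <| prod_ne_zero_iff.2 fun c _ =>
    pb.gen_pow_add_sumSmulPow_ne_zero hk c

variable [Fintype K]

lemma PowerBasis.sum_sumSmulPow_gen {M : Type*} [AddCommMonoid M] (f : K → M) :
    ∑ c : Fin pb.dim → Fq, f (sumSmulPow pb.gen c) = ∑ x, f x :=
  Fintype.sum_equiv pb.basis.equivFun.symm _ _ fun c => by
    simp [sumSmulPow, Module.Basis.equivFun_symm_apply, pb.coe_basis]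

lemma PowerBasis.sum_gen_pow_add_sumSmulPow_pow (n : ℕ) {m : ℕ} (hm : m < Fintype.card K - 1) :
    ∑ c : Fin pb.dim → Fq, (pb.gen ^ n + sumSmulPow pb.gen c) ^ m = 0 := by
  rw [pb.sum_sumSmulPow_gen fun x => (pb.gen ^ n + x) ^ m,
    Fintype.sum_equiv (Equiv.addLeft (pb.gen ^ n)) (fun x => (pb.gen ^ n + x) ^ m) (· ^ m)
      fun _ => rfl, FiniteField.sum_pow_lt_card_sub_one _ _ hm]

lemma PowerBasis.aeval_sum_monic_pow_card_sub_two :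
    aeval pb.gen (∑ k ∈ range (pb.dim + 1),
      ∑ᶠ a ∈ {a : Fq[X] | a.Monic ∧ a.natDegree = k}, a ^ (Fintype.card K - 2)) =
        ∑ k ∈ range pb.dim, (carlitzL (Fintype.card Fq) pb.gen k)⁻¹ := by
  simp only [finsum_mem_monic_natDegree_eq, map_sum, map_pow, map_add, aeval_X, map_sumSmulPow]
  have := Fintype.one_lt_card (α := K)
  rw [sum_range_succ, pb.sum_gen_pow_add_sumSmulPow_pow _ (by omega), add_zero]
  refine sum_congr rfl fun k hk => ?_
  have hk := mem_range.1 hk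
  simp only [FiniteField.pow_card_sub_two_eq_inv (pb.gen_pow_add_sumSmulPow_ne_zero hk _)]
  exact (eq_inv_of_mul_eq_one_right (pb.carlitzL_gen_mul_sum_inv hk))

end PowerBasis

lemma map_mul_inv_of_mul_eq {R S : Type*} [CommRing R] [Field S] (ψ : R →+* S) {a b c : R}
    (h : a * b = c) (ha : ψ a ≠ 0) : ψ c * (ψ a)⁻¹ = ψ b := by
  rw [← h, map_mul, mul_comm, inv_mul_cancel_left₀ ha]

lemma IsFractionRing.map_eq_mul_sub_sum_inv {R F K ι : Type*} [CommRing R] [IsDomain R] [Field F]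
    [Algebra R F] [IsFractionRing R F] [Field K] (φ : R →+* K) {g u B : R} {s : Finset ι}
    {L N : ι → R} (hLN : ∀ i ∈ s, L i * N i = u) (hL : ∀ i ∈ s, φ (L i) ≠ 0)
    (hg : algebraMap R F g =
      algebraMap R F u * algebraMap R F B - algebraMap R F u * ∑ i ∈ s, (algebraMap R F (L i))⁻¹) :
    φ g = φ u * (φ B - ∑ i ∈ s, (φ (L i))⁻¹) := by
  have hpoly : g = u * B - ∑ i ∈ s, N i := by
    refine IsFractionRing.injective R F ?_
    rw [hg, map_sub, map_mul, map_sum, mul_sum]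
    refine congrArg _ (sum_congr rfl fun i hi => map_mul_inv_of_mul_eq _ (hLN i hi) ?_)
    exact (map_ne_zero_iff _ (IsFractionRing.injective R F)).2 fun h => hL i hi (by simp [h])
  rw [hpoly, map_sub, map_mul, map_sum, mul_sub, mul_sum]
  exact congrArg _ (sum_congr rfl fun i hi => (map_mul_inv_of_mul_eq φ (hLN i hi) (hL i hi)).symm)

theorem bernoulliGoss_congruence_general
    (Fq : Type) [Field Fq] [Fintype Fq] (q : ℕ) (hq : q = Fintype.card Fq)
    (θ : RatFunc Fq) (hθ : θ = RatFunc.X)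
    (l : ℕ → RatFunc Fq) (hl0 : l 0 = 1)
    (hl : ∀ i, l (i + 1) = (θ - θ ^ q ^ (i + 1)) * l i)
    (d : ℕ) (P : Polynomial Fq) (hPirr : Irreducible P)
    (hPdeg : P.natDegree = d)
    (BG : Polynomial Fq)
    (hBG : BG = ∑ k ∈ Finset.range (d + 1),
      ∑ᶠ a ∈ {a : Polynomial Fq | a.Monic ∧ a.natDegree = k}, a ^ (q ^ d - 2))
    (g : Polynomial Fq)
    (hg : algebraMap (Polynomial Fq) (RatFunc Fq) g =
      l (d - 1) * algebraMap (Polynomial Fq) (RatFunc Fq) BG -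
        l (d - 1) * ∑ i ∈ Finset.range d, (l i)⁻¹) :
    P ∣ g := by
  subst hq hθ hPdeg
  have : Fact (Irreducible P) := ⟨hPirr⟩
  let pb := AdjoinRoot.powerBasis hPirr.ne_zero
  let : Fintype (AdjoinRoot P) := Fintype.ofEquiv _ pb.basis.equivFun.symm.toEquiv
  have hcard : Fintype.card (AdjoinRoot P) = Fintype.card Fq ^ P.natDegree := by
    rw [Module.card_fintype pb.basis, Fintype.card_fin, AdjoinRoot.powerBasis_dim]
  have hmk (i : ℕ) : AdjoinRoot.mk P (carlitzL (Fintype.card Fq) X i) =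
      carlitzL (Fintype.card Fq) (AdjoinRoot.root P) i := by
    rw [map_carlitzL, AdjoinRoot.mk_X]
  have hBG_mk := pb.aeval_sum_monic_pow_card_sub_two
  rw [hcard, AdjoinRoot.powerBasis_dim, AdjoinRoot.powerBasis_gen, AdjoinRoot.aeval_eq,
    ← hBG] at hBG_mk
  have hl_eq := eq_map_carlitzL (algebraMap Fq[X] (RatFunc Fq)) (Fintype.card Fq) X hl0
    (by simpa only [RatFunc.algebraMap_X] using hl)
  rw [← AdjoinRoot.mk_eq_zero, IsFractionRing.map_eq_mul_sub_sum_inv _ (s := range P.natDegree)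
    (fun i hi => carlitzL_mul_prod_Ico _ (X : Fq[X]) (Nat.le_sub_one_of_lt (mem_range.1 hi)))
    (fun i hi => by
      rw [hmk]; exact left_ne_zero_of_mul_eq_one (pb.carlitzL_gen_mul_sum_inv (mem_range.1 hi)))
    (by simpa only [hl_eq] using hg), hBG_mk]
  simp [hmk]

/-- For `q > 2` and `P` monic irreducible of degree `d` in `F_q[θ]`,
`BG_{q^d−2} ≡ ∑_{i=0}^{d−1} 1/l_i (mod P)`: `P` divides the polynomial
`g` whose image in `F_q(θ)` is `l_{d−1}·BG_{q^d−2} − l_{d−1}·∑_{i<d} l_i⁻¹`. -/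
theorem bernoulliGoss_congruence
    (Fq : Type) [Field Fq] [Fintype Fq] (q : ℕ) (hq : q = Fintype.card Fq) (hq2 : 2 < q)
    (θ : RatFunc Fq) (hθ : θ = RatFunc.X)
    (l : ℕ → RatFunc Fq) (hl0 : l 0 = 1)
    (hl : ∀ i, l (i + 1) = (θ - θ ^ q ^ (i + 1)) * l i)
    (d : ℕ) (P : Polynomial Fq) (hP : P.Monic) (hPirr : Irreducible P)
    (hPdeg : P.natDegree = d)
    (BG : Polynomial Fq)
    (hBG : BG = ∑ k ∈ Finset.range (d + 1),
      ∑ᶠ a ∈ {a : Polynomial Fq | a.Monic ∧ a.natDegree = k}, a ^ (q ^ d - 2))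
    (g : Polynomial Fq)
    (hg : algebraMap (Polynomial Fq) (RatFunc Fq) g =
      l (d - 1) * algebraMap (Polynomial Fq) (RatFunc Fq) BG -
        l (d - 1) * ∑ i ∈ Finset.range d, (l i)⁻¹) :
    P ∣ g :=
  bernoulliGoss_congruence_general Fq q hq θ hθ l hl0 hl d P hPirr hPdeg BG hBG g hg
end
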